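/- arXiv:1903.04327 — 2 statements merged into one kernel-verified Lean document; each statement's English description precedes it below -/
import Mathlib

section
/- Let ĉ: Q̂ → Q be the universal abelian covering of a quiver Q and let M̂ be a finite-dimensional representation of Q̂ whose pushdown M = ĉ(M̂) satisfies Ext¹_Q(M,M) = 0. Then Ext¹_{Q̂}(M̂,M̂) = 0, i.e. rigidity lifts to the cover. -/
/-- A quiver: a set of vertices, a set of arrows, and source/target maps. -/
structure Quiv where
  V : Type
  A : Type
  s : A → V
  t : A → V

/-- A representation of the quiver `Q` over the field `k`: a vector space for every
vertex and a linear map for every arrow. -/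
structure QRep (k : Type) [Field k] (Q : Quiv) where
  carrier : Q.V → Type
  [acg : ∀ i, AddCommGroup (carrier i)]
  [mod : ∀ i, Module k (carrier i)]
  map : ∀ a : Q.A, carrier (Q.s a) →ₗ[k] carrier (Q.t a)

attribute [instance] QRep.acg QRep.mod

namespace QRep

variable {k : Type} [Field k] {Q : Quiv}

/-- The space `Hom_Q(M,N)` of morphisms of representations, realized as a subspace of
`⊕_{i ∈ Q₀} Hom_k(M_i, N_i)`. -/
def homSet (M N : QRep k Q) : Submodule k (∀ i, M.carrier i →ₗ[k] N.carrier i) where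
  carrier := {f | ∀ a : Q.A, N.map a ∘ₗ f (Q.s a) = f (Q.t a) ∘ₗ M.map a}
  add_mem' := by
    intro f g hf hg a
    simp only [Pi.add_apply, LinearMap.comp_add, LinearMap.add_comp, hf a, hg a]
  zero_mem' := by intro a; simp
  smul_mem' := by
    intro c f hf a
    simp only [Pi.smul_apply, LinearMap.comp_smul, LinearMap.smul_comp, hf a]

/-- The map `φ : ⊕_i Hom(M_i,N_i) → ⊕_{α} Hom(M_{s(α)}, N_{t(α)})`,
`φ((f_i)_i) = (N_α ∘ f_{s(α)} − f_{t(α)} ∘ M_α)_α`, arising from the standard projective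
resolution of `M`. -/
def extMap (M N : QRep k Q) :
    (∀ i, M.carrier i →ₗ[k] N.carrier i) →ₗ[k]
      (∀ a : Q.A, M.carrier (Q.s a) →ₗ[k] N.carrier (Q.t a)) where
  toFun f := fun a => N.map a ∘ₗ f (Q.s a) - f (Q.t a) ∘ₗ M.map a
  map_add' f g := by
    funext a
    simp only [Pi.add_apply, LinearMap.comp_add, LinearMap.add_comp]
    abel
  map_smul' c f := by
    funext a
    simp only [Pi.smul_apply, LinearMap.comp_smul, LinearMap.smul_comp, RingHom.id_apply,
      smul_sub]

/-- The extension group `Ext¹_Q(M,N)`, realized as the cokernel of `extMap M N`;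
by the standard projective resolution of `M` this is the first extension group in the
category of representations of `Q`. -/
def Ext1 (M N : QRep k Q) :=
  (∀ a : Q.A, M.carrier (Q.s a) →ₗ[k] N.carrier (Q.t a)) ⧸ LinearMap.range (extMap M N)

noncomputable instance (M N : QRep k Q) : AddCommGroup (Ext1 M N) :=
  inferInstanceAs (AddCommGroup ((∀ _a : Q.A, _ →ₗ[k] _) ⧸ LinearMap.range (extMap M N)))

noncomputable instance (M N : QRep k Q) : Module k (Ext1 M N) :=
  inferInstanceAs (Module k ((∀ _a : Q.A, _ →ₗ[k] _) ⧸ LinearMap.range (extMap M N)))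

end QRep

open scoped Classical in
/-- The universal abelian covering quiver of `Q`: vertices `Q₀ × ℤ^{Q₁}`,
arrows `Q₁ × ℤ^{Q₁}`, where the arrow `(α, χ)` goes from `(s α, χ)` to `(t α, χ + α)`. -/
noncomputable def Quiv.hat (Q : Quiv) : Quiv where
  V := Q.V × (Q.A →₀ ℤ)
  A := Q.A × (Q.A →₀ ℤ)
  s := fun p => (Q.s p.1, p.2)
  t := fun p => (Q.t p.1, p.2 + Finsupp.single p.1 1)

attribute [reducible] Quiv.hat

namespace QRep

open scoped Classical DirectSum

variable {k : Type} [Field k] {Q : Quiv}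

/-- The pushdown functor along `ĉ : Q̂ → Q`: `ĉ(N̂)_i = ⊕_χ N̂_{i,χ}` with the map over
an arrow `α` acting componentwise via the maps `N̂_{(α,χ)} : N̂_{s(α),χ} → N̂_{t(α),χ+α}`. -/
noncomputable def pushdown (Mh : QRep k Q.hat) : QRep k Q where
  carrier i := ⨁ χ : (Q.A →₀ ℤ), Mh.carrier (i, χ)
  map a := DirectSum.toModule k _ _ fun χ =>
    (DirectSum.lof k (Q.A →₀ ℤ) (fun χ' => Mh.carrier (Q.t a, χ')) (χ + Finsupp.single a 1))
      ∘ₗ Mh.map (a, χ)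

/-- The shift functor `S_ξ` on representations of `Q̂`:
`S_ξ(M̂)_{i,χ} = M̂_{i,χ+ξ}` and `S_ξ(M̂)_{(α,χ)} = M̂_{(α,χ+ξ)}`. -/
noncomputable def shift (ξ : Q.A →₀ ℤ) (Mh : QRep k Q.hat) : QRep k Q.hat where
  carrier v := Mh.carrier (v.1, v.2 + ξ)
  map a := by
    have h : (Q.t a.1, a.2 + ξ + Finsupp.single a.1 1)
        = (Q.t a.1, a.2 + Finsupp.single a.1 1 + ξ) := by
      rw [add_right_comm]
    exact (h ▸ Mh.map (a.1, a.2 + ξ) :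
      Mh.carrier (Q.s a.1, a.2 + ξ) →ₗ[k] Mh.carrier (Q.t a.1, a.2 + Finsupp.single a.1 1 + ξ))

end QRep

/-!
A cochain `g = (g_{(α,χ)})` of `Q̂` assembles into a cochain of `Q` between the pushdowns which is
homogeneous of degree `0` for the `ℤ^{Q₁}`-grading, and `g` is recovered as its degree-`0` part. The
arrow maps of a pushdown are themselves homogeneous of degree `0`, so taking degree-`0` parts commutes
with the coboundary map `φ`. Hence if the assembled cochain is `φ(F)`, then `g` is `φ` of the
degree-`0` part `(π_χ ∘ F_i ∘ ι_χ)_{(i,χ)}` of `F`.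
-/

namespace QRep

open scoped Classical DirectSum

variable {k : Type} [Field k] {Q : Quiv} {Mh Nh : QRep k Q.hat}

theorem subsingleton_ext1_iff {M N : QRep k Q} :
    Subsingleton (Ext1 M N) ↔ Function.Surjective (extMap M N) := by
  rw [← LinearMap.range_eq_top]
  exact Submodule.Quotient.subsingleton_iff

noncomputable def pushdownCochain
    (g : ∀ a : Q.hat.A, Mh.carrier (Q.hat.s a) →ₗ[k] Nh.carrier (Q.hat.t a)) (a : Q.A) :
    (⨁ χ, Mh.carrier (Q.s a, χ)) →ₗ[k] ⨁ χ, Nh.carrier (Q.t a, χ) :=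
  DirectSum.toModule k _ _ fun χ =>
    DirectSum.lof k _ (fun χ' => Nh.carrier (Q.t a, χ')) (χ + Finsupp.single a 1) ∘ₗ g (a, χ)

theorem pushdownCochain_lof
    (g : ∀ a : Q.hat.A, Mh.carrier (Q.hat.s a) →ₗ[k] Nh.carrier (Q.hat.t a))
    (a : Q.A) (χ : Q.A →₀ ℤ) (x : Mh.carrier (Q.s a, χ)) :
    pushdownCochain g a (DirectSum.lof k _ (fun χ' => Mh.carrier (Q.s a, χ')) χ x) =
      DirectSum.lof k _ (fun χ' => Nh.carrier (Q.t a, χ')) (χ + Finsupp.single a 1)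
        (g (a, χ) x) :=
  DirectSum.toModule_lof k _ _

theorem component_pushdownCochain
    (g : ∀ a : Q.hat.A, Mh.carrier (Q.hat.s a) →ₗ[k] Nh.carrier (Q.hat.t a))
    (a : Q.A) (χ : Q.A →₀ ℤ) (y : ⨁ χ', Mh.carrier (Q.s a, χ')) :
    DirectSum.component k _ (fun χ' => Nh.carrier (Q.t a, χ')) (χ + Finsupp.single a 1)
        (pushdownCochain g a y) =
      g (a, χ) (DirectSum.component k _ (fun χ' => Mh.carrier (Q.s a, χ')) χ y) := by
  induction y using DirectSum.induction_on with
  | zero => simp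
  | of χ' x =>
    rw [← DirectSum.lof_eq_of k, pushdownCochain_lof]
    by_cases h : χ' = χ
    · subst h
      simp only [DirectSum.component.lof_self]
    · rw [DirectSum.component.of, DirectSum.component.of, dif_neg h,
        dif_neg fun h' => h (add_right_cancel h'), map_zero]
  | add u v hu hv => simp only [map_add, hu, hv]

noncomputable def homDegreeZero
    (F : ∀ i, (⨁ χ, Mh.carrier (i, χ)) →ₗ[k] ⨁ χ, Nh.carrier (i, χ)) (v : Q.hat.V) :
    Mh.carrier v →ₗ[k] Nh.carrier v :=
  DirectSum.component k _ (fun χ => Nh.carrier (v.1, χ)) v.2 ∘ₗ F v.1 ∘ₗ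
    DirectSum.lof k _ (fun χ => Mh.carrier (v.1, χ)) v.2

noncomputable def cochainDegreeZero
    (G : ∀ a : Q.A, (⨁ χ, Mh.carrier (Q.s a, χ)) →ₗ[k] ⨁ χ, Nh.carrier (Q.t a, χ))
    (a : Q.hat.A) : Mh.carrier (Q.hat.s a) →ₗ[k] Nh.carrier (Q.hat.t a) :=
  DirectSum.component k _ (fun χ => Nh.carrier (Q.t a.1, χ)) (a.2 + Finsupp.single a.1 1) ∘ₗ
    G a.1 ∘ₗ DirectSum.lof k _ (fun χ => Mh.carrier (Q.s a.1, χ)) a.2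

theorem cochainDegreeZero_pushdownCochain
    (g : ∀ a : Q.hat.A, Mh.carrier (Q.hat.s a) →ₗ[k] Nh.carrier (Q.hat.t a)) :
    cochainDegreeZero (pushdownCochain g) = g := by
  funext ⟨a, χ⟩
  ext x
  simp only [cochainDegreeZero, LinearMap.comp_apply, component_pushdownCochain,
    DirectSum.component.lof_self]

theorem extMap_apply {M N : QRep k Q} (f : ∀ i, M.carrier i →ₗ[k] N.carrier i) (a : Q.A) :
    extMap M N f a = N.map a ∘ₗ f (Q.s a) - f (Q.t a) ∘ₗ M.map a :=
  rfl

-- The arrow maps of `pushdown M` are `pushdownCochain M.map`; families of maps between pushdowns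
-- are typed on the direct sums themselves, since `(pushdown M).carrier` does not unfold for the
-- `DirectSum` simp lemmas.
theorem extMap_pushdown (F : ∀ i, (⨁ χ, Mh.carrier (i, χ)) →ₗ[k] ⨁ χ, Nh.carrier (i, χ))
    (a : Q.A) :
    extMap (pushdown Mh) (pushdown Nh) F a =
      pushdownCochain Nh.map a ∘ₗ F (Q.s a) - F (Q.t a) ∘ₗ pushdownCochain Mh.map a :=
  rfl

theorem extMap_homDegreeZero
    (F : ∀ i, (⨁ χ, Mh.carrier (i, χ)) →ₗ[k] ⨁ χ, Nh.carrier (i, χ)) :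
    extMap Mh Nh (homDegreeZero F) = cochainDegreeZero (extMap (pushdown Mh) (pushdown Nh) F) := by
  funext ⟨α, χ⟩
  ext x
  rw [extMap_apply]
  simp only [cochainDegreeZero, homDegreeZero, extMap_pushdown,
    LinearMap.comp_apply, LinearMap.sub_apply, map_sub, component_pushdownCochain,
    pushdownCochain_lof]

theorem subsingleton_ext1_of_pushdown
    (h : Subsingleton (Ext1 (pushdown Mh) (pushdown Nh))) : Subsingleton (Ext1 Mh Nh) := by
  rw [subsingleton_ext1_iff] at h ⊢
  intro g
  obtain ⟨F, hF⟩ := h (pushdownCochain g)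
  refine ⟨homDegreeZero F, (extMap_homDegreeZero F).trans ?_⟩
  rw [hF, cochainDegreeZero_pushdownCochain]

end QRep

open QRep in
theorem stmt7_general {k : Type} [Field k] {Q : Quiv} (Mh : QRep k Q.hat)
    (hrigid : Subsingleton (Ext1 (pushdown Mh) (pushdown Mh))) :
    Subsingleton (Ext1 Mh Mh) :=
  subsingleton_ext1_of_pushdown hrigid

open QRep in
/-- Let `ĉ : Q̂ → Q` be the universal abelian covering and `M̂` a
finite-dimensional representation of `Q̂` whose pushdown `M = ĉ(M̂)` satisfies
`Ext¹_Q(M,M) = 0`. Then `Ext¹_{Q̂}(M̂,M̂) = 0`: rigidity lifts to the cover. -/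
theorem stmt7 {k : Type} [Field k] [IsAlgClosed k] {Q : Quiv} (Mh : QRep k Q.hat)
    [∀ v, FiniteDimensional k (Mh.carrier v)]
    (S : Finset (Q.A →₀ ℤ))
    (hMS : ∀ (i : Q.V) (χ : Q.A →₀ ℤ), χ ∉ S → Subsingleton (Mh.carrier (i, χ)))
    (hrigid : Subsingleton (Ext1 (pushdown Mh) (pushdown Mh))) :
    Subsingleton (Ext1 Mh Mh) :=
  stmt7_general Mh hrigid
end

section
/- Let Q be a quiver, l a sink of Q adjacent to exactly one arrow β: k → l, and M a representation of Q. For a dimension vector e, let e' be its restriction away from l and M' the restriction of M to the full subquiver on Q₀ ∖ {l}. Then the map p_l: Gr_e(M) → Gr_{e'}(M'), U ↦ (U_i)_{i≠l}, is well-defined, and for any subrepresentation U' ∈ Gr_{e'}(M'), the fiber p_l⁻¹(U') is in bijection with the set {W ∈ Gr_{e_l}(M_l) : M_β(U'_k) ⊆ W} of e_l-dimensional subspaces of M_l containing M_β(U'_k). -/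
namespace QRep

variable {k : Type} [Field k] {Q : Quiv}

/-- A family of subspaces `U_i ⊆ M_i` is a subrepresentation if
`M_α(U_{s(α)}) ⊆ U_{t(α)}` for every arrow `α`. -/
def IsSubrep (M : QRep k Q) (U : ∀ i, Submodule k (M.carrier i)) : Prop :=
  ∀ a : Q.A, (U (Q.s a)).map (M.map a) ≤ U (Q.t a)

/-- The set of points of the quiver Grassmannian `Gr_e(M)`: subrepresentations of `M`
of dimension vector `e`. -/
def GrSet (M : QRep k Q) (e : Q.V → ℕ) :=
  {U : ∀ i, Submodule k (M.carrier i) //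
    M.IsSubrep U ∧ ∀ i, Module.finrank k (U i) = e i}

end QRep

/-- The full subquiver of `Q` on the complement of the vertex `l`: its arrows are the
arrows of `Q` with both endpoints different from `l`. -/
def Quiv.deleteVertex (Q : Quiv) (l : Q.V) : Quiv where
  V := {v : Q.V // v ≠ l}
  A := {a : Q.A // Q.s a ≠ l ∧ Q.t a ≠ l}
  s := fun a => ⟨Q.s a.1, a.2.1⟩
  t := fun a => ⟨Q.t a.1, a.2.2⟩

/-- The restriction `M'` of a representation `M` of `Q` to the full subquiver obtained
by deleting the vertex `l`. -/
def QRep.restrict {k : Type} [Field k] {Q : Quiv} (M : QRep k Q) (l : Q.V) :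
    QRep k (Q.deleteVertex l) where
  carrier v := M.carrier v.1
  map a := M.map a.1

/-!
Because `l = Q.t β` is a sink whose only incoming arrow is `β`, the single subrepresentation
condition involving `U_l` is `M_β(U_κ) ⊆ U_l`, and `U_l` occurs in no other condition. Hence a
subrepresentation of `M` is the same thing as a subrepresentation `U'` of `M'` together with an
arbitrary subspace of `M_l` containing `M_β(U'_κ)`, and dimension vectors split accordingly.
-/

namespace QRep

variable {k : Type} [Field k] {Q : Quiv} {M : QRep k Q}

theorem IsSubrep.restrict {U : ∀ i, Submodule k (M.carrier i)} (hU : M.IsSubrep U) (l : Q.V) :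
    (M.restrict l).IsSubrep (fun v => U v.1) :=
  fun a => hU a.1

/-- The point `p_l(U)` of `Gr_{e'}(M')`. -/
def GrSet.restrict {e : Q.V → ℕ} (U : M.GrSet e) (l : Q.V) :
    (M.restrict l).GrSet (fun v => e v.1) :=
  ⟨fun v => U.1 v.1, U.2.1.restrict l, fun v => U.2.2 v.1⟩

section ExtendAt

variable {l : Q.V}

open Classical in
noncomputable def extendAt (U' : ∀ v : (Q.deleteVertex l).V, Submodule k (M.carrier v.1))
    (W : Submodule k (M.carrier l)) (i : Q.V) : Submodule k (M.carrier i) :=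
  if h : i = l then h ▸ W else U' ⟨i, h⟩

variable (U' : ∀ v : (Q.deleteVertex l).V, Submodule k (M.carrier v.1))
  (W : Submodule k (M.carrier l))

@[simp]
theorem extendAt_self : extendAt U' W l = W :=
  dif_pos rfl

@[simp]
theorem extendAt_of_ne {i : Q.V} (h : i ≠ l) : extendAt U' W i = U' ⟨i, h⟩ :=
  dif_neg h

theorem extendAt_restrict (U : ∀ i, Submodule k (M.carrier i)) :
    extendAt (fun v : (Q.deleteVertex l).V => U v.1) (U l) = U := by
  funext i
  by_cases h : i = l
  · subst h
    exact extendAt_self _ _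
  · exact extendAt_of_ne _ _ h

theorem finrank_extendAt {e : Q.V → ℕ} (hU' : ∀ v, Module.finrank k (U' v) = e v.1)
    (hW : Module.finrank k W = e l) (i : Q.V) :
    Module.finrank k (extendAt U' W i) = e i := by
  by_cases h : i = l
  · subst h
    rw [extendAt_self, hW]
  · rw [extendAt_of_ne _ _ h]
    exact hU' ⟨i, h⟩

end ExtendAt

theorem isSubrep_extendAt {β : Q.A} (hsink : ∀ a : Q.A, Q.s a ≠ Q.t β)
    (hleaf : ∀ a : Q.A, Q.t a = Q.t β → a = β)
    {U' : ∀ v : (Q.deleteVertex (Q.t β)).V, Submodule k (M.carrier v.1)}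
    {W : Submodule k (M.carrier (Q.t β))} (hU' : (M.restrict (Q.t β)).IsSubrep U')
    (hW : (U' ⟨Q.s β, hsink β⟩).map (M.map β) ≤ W) :
    M.IsSubrep (extendAt U' W) := by
  intro a
  rw [extendAt_of_ne _ _ (hsink a)]
  by_cases h : Q.t a = Q.t β
  · obtain rfl := hleaf a h
    rwa [extendAt_self]
  · rw [extendAt_of_ne _ _ h]
    exact hU' ⟨a, hsink a, h⟩

noncomputable def fiberEquiv {β : Q.A} (hsink : ∀ a : Q.A, Q.s a ≠ Q.t β)
    (hleaf : ∀ a : Q.A, Q.t a = Q.t β → a = β) {e : Q.V → ℕ}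
    (U' : (M.restrict (Q.t β)).GrSet (fun v => e v.1)) :
    {U : M.GrSet e // ∀ v : (Q.deleteVertex (Q.t β)).V, U.1 v.1 = U'.1 v} ≃
      {W : Submodule k (M.carrier (Q.t β)) //
        Module.finrank k W = e (Q.t β) ∧ (U'.1 ⟨Q.s β, hsink β⟩).map (M.map β) ≤ W} where
  toFun U := ⟨U.1.1 (Q.t β), U.1.2.2 _, U.2 ⟨Q.s β, hsink β⟩ ▸ U.1.2.1 β⟩
  invFun W := ⟨⟨extendAt U'.1 W.1, isSubrep_extendAt hsink hleaf U'.2.1 W.2.2,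
    finrank_extendAt _ _ U'.2.2 W.2.1⟩, fun v => extendAt_of_ne _ _ v.2⟩
  left_inv U := by
    have hU' : U'.1 = fun v : (Q.deleteVertex (Q.t β)).V => U.1.1 v.1 :=
      funext fun v => (U.2 v).symm
    refine Subtype.ext (Subtype.ext ?_)
    simp only [hU']
    exact extendAt_restrict _
  right_inv W := Subtype.ext (extendAt_self _ _)

end QRep

open QRep in
theorem stmt17_general {k : Type} [Field k] {Q : Quiv} (β : Q.A)
    (hsink : ∀ a : Q.A, Q.s a ≠ Q.t β)
    (hleaf : ∀ a : Q.A, Q.t a = Q.t β → a = β)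
    (M : QRep k Q) (e : Q.V → ℕ) :
    -- `p_l` is well-defined: the restriction of a subrepresentation of dimension
    -- vector `e` is a subrepresentation of `M'` of dimension vector `e'`
    (∀ U : GrSet M e,
      (M.restrict (Q.t β)).IsSubrep (fun v => U.1 v.1) ∧
        ∀ v : (Q.deleteVertex (Q.t β)).V, Module.finrank k (U.1 v.1) = e v.1) ∧
    -- fiber description: for every `U' ∈ Gr_{e'}(M')`, the fiber of `p_l` over `U'`
    -- is in bijection with `{W ∈ Gr_{e_l}(M_l) : M_β(U'_κ) ⊆ W}`
    (∀ U' : GrSet (M.restrict (Q.t β)) (fun v => e v.1),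
      Nonempty
        ({U : GrSet M e // ∀ v : (Q.deleteVertex (Q.t β)).V, U.1 v.1 = U'.1 v} ≃
          {W : Submodule k (M.carrier (Q.t β)) //
            Module.finrank k W = e (Q.t β) ∧
              (U'.1 ⟨Q.s β, hsink β⟩).map (M.map β) ≤ W})) :=
  ⟨fun U => (U.restrict (Q.t β)).2, fun U' => ⟨fiberEquiv hsink hleaf U'⟩⟩

open QRep in
/-- Let `Q` be a quiver, `l` a sink of `Q` adjacent to exactly one
arrow `β : κ → l` (here `l = Q.t β`), `M` a representation of `Q`, `e` a dimension
vector with restriction `e'` away from `l`, and `M'` the restriction of `M` to the full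
subquiver on `Q₀ ∖ {l}`.  Then the forgetful map
`p_l : Gr_e(M) → Gr_{e'}(M')`, `U ↦ (U_i)_{i ≠ l}`, is well-defined, and for every
`U' ∈ Gr_{e'}(M')` the fiber `p_l⁻¹(U')` is in bijection with the set of
`e_l`-dimensional subspaces `W ⊆ M_l` with `M_β(U'_κ) ⊆ W`. -/
theorem stmt17 {k : Type} [Field k] [IsAlgClosed k] {Q : Quiv} (β : Q.A)
    (hsink : ∀ a : Q.A, Q.s a ≠ Q.t β)
    (hleaf : ∀ a : Q.A, Q.t a = Q.t β → a = β)
    (M : QRep k Q) [∀ i, FiniteDimensional k (M.carrier i)] (e : Q.V → ℕ) :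
    -- `p_l` is well-defined: the restriction of a subrepresentation of dimension
    -- vector `e` is a subrepresentation of `M'` of dimension vector `e'`
    (∀ U : GrSet M e,
      (M.restrict (Q.t β)).IsSubrep (fun v => U.1 v.1) ∧
        ∀ v : (Q.deleteVertex (Q.t β)).V, Module.finrank k (U.1 v.1) = e v.1) ∧
    -- fiber description: for every `U' ∈ Gr_{e'}(M')`, the fiber of `p_l` over `U'`
    -- is in bijection with `{W ∈ Gr_{e_l}(M_l) : M_β(U'_κ) ⊆ W}`
    (∀ U' : GrSet (M.restrict (Q.t β)) (fun v => e v.1),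
      Nonempty
        ({U : GrSet M e // ∀ v : (Q.deleteVertex (Q.t β)).V, U.1 v.1 = U'.1 v} ≃
          {W : Submodule k (M.carrier (Q.t β)) //
            Module.finrank k W = e (Q.t β) ∧
              (U'.1 ⟨Q.s β, hsink β⟩).map (M.map β) ≤ W})) :=
  stmt17_general β hsink hleaf M e
end
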